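/- Let F be a commutative ring, let n ≥ 1 be a natural number, and let q, t ∈ F satisfy t·q^{n−1} = 1 (i.e. t = q^{1−n}). Let V = ℕ →₀ F be the free F-module with basis (e_k)_{k∈ℕ}, and define δ : V → V ⊗ V by δ(e_k) = Σ_{m=0}^{k} [k m]_q · (t·q^m ; q)_{k-m} · e_{k-m} ⊗ e_m. Then e_n is a coinvariant vector: δ(e_n) = e_0 ⊗ e_n. -/
import Mathlib


/-!
Statement 13: if `t q^{n−1} = 1` (i.e. `t = q^{1−n}`) then `e_n` is a coinvariant
vector for the left coaction `δ` of the rank-1 braided tensor algebra: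
`δ(e_n) = e_0 ⊗ e_n`.
-/

open scoped TensorProduct

/-- The Gaussian binomial coefficient `[k m]_q` evaluated at an element `q` of a ring,
defined by `[k 0]_q = 1`, `[0 (m+1)]_q = 0` and the q-Pascal recurrence
`[k+1, m+1]_q = [k m]_q + q^(m+1) * [k, m+1]_q`. -/
def qBinom {R : Type*} [Ring R] (q : R) : ℕ → ℕ → R
  | _, 0 => 1
  | 0, _ + 1 => 0
  | k + 1, m + 1 => qBinom q k m + q ^ (m + 1) * qBinom q k (m + 1)

/-- The q-Pochhammer symbol `(z;q)_n = ∏_{i=0}^{n−1} (1 − z q^i)`. -/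
def qPoch {R : Type*} [CommRing R] (z q : R) (n : ℕ) : R :=
  ∏ i ∈ Finset.range n, (1 - z * q ^ i)


lemma qBinom_eq_zero {R : Type*} [Ring R] (q : R) {k m : ℕ} (h : k < m) :
    qBinom q k m = 0 := by
  induction k generalizing m with
  | zero => obtain ⟨m, rfl⟩ := Nat.exists_eq_add_of_lt h; simp [qBinom]
  | succ k ih =>
    obtain ⟨m, rfl⟩ : ∃ m', m = m' + 1 := ⟨m - 1, by omega⟩
    rw [qBinom, ih (by omega), ih (by omega), mul_zero, add_zero]

lemma qBinom_self {R : Type*} [Ring R] (q : R) (k : ℕ) : qBinom q k k = 1 := by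
  induction k with
  | zero => rfl
  | succ k ih => rw [qBinom, ih, qBinom_eq_zero q (Nat.lt_succ_self k), mul_zero, add_zero]

theorem coinvariant_vector {F : Type*} [CommRing F] (q t : F) (n : ℕ) (hn : 1 ≤ n)
    (ht : t * q ^ (n - 1) = 1)
    (δ : (ℕ →₀ F) →ₗ[F] (ℕ →₀ F) ⊗[F] (ℕ →₀ F))
    (hδ : ∀ k : ℕ, δ (Finsupp.single k 1) =
      ∑ m ∈ Finset.range (k + 1),
        (qBinom q k m * qPoch (t * q ^ m) q (k - m)) •
          (Finsupp.single (k - m) (1 : F) ⊗ₜ[F] Finsupp.single m (1 : F))) :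
    δ (Finsupp.single n 1) = Finsupp.single 0 (1 : F) ⊗ₜ[F] Finsupp.single n (1 : F) := by
  rw [hδ n, Finset.sum_eq_single n]
  · rw [Nat.sub_self, qBinom_self]
    simp [qPoch]
  · intro m hm hmn
    have hmlt : m < n := by simp at hm; omega
    have : qPoch (t * q ^ m) q (n - m) = 0 := by
      apply Finset.prod_eq_zero (i := n - 1 - m)
      · simp; omega
      · have : t * q ^ m * q ^ (n - 1 - m) = t * q ^ (n - 1) := by
          rw [mul_assoc, ← pow_add]
          congr 2
          omega
        rw [this, ht, sub_self]
    rw [this, mul_zero, zero_smul]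
  · intro h; simp at h
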